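/- arXiv:2006.04287 — 4 statements merged into one kernel-verified Lean document; each statement's English description precedes it below -/
import Mathlib

section
/- Let A: H → H be monotone and L-Lipschitz on C and S = P_C(I − μA) with μ > 0. If a sequence {x_n} ⊂ H satisfies x_n ⇀ q weakly and ‖x_n − Sx_n‖ → 0, then q ∈ VI(C, A). -/
open RealInnerProductSpace Filter Topology

theorem stmt_6 {H : Type*} [NormedAddCommGroup H] [InnerProductSpace ℝ H] [CompleteSpace H]
    (C : Set H) (hCne : C.Nonempty) (hCc : IsClosed C) (hCconv : Convex ℝ C)
    (P : H → H)
    (hP : ∀ x : H, P x ∈ C ∧ ∀ y ∈ C, ‖x - P x‖ ≤ ‖x - y‖)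
    (A : H → H) (L : ℝ) (hL : 0 < L)
    (hmono : ∀ x y : H, 0 ≤ ⟪A x - A y, x - y⟫)
    (hlip : LipschitzWith (Real.toNNReal L) A)
    (μ : ℝ) (hμ : 0 < μ)
    (S : H → H) (hS : ∀ x : H, S x = P (x - μ • A x))
    (x : ℕ → H) (q : H)
    (hweak : ∀ v : H, Tendsto (fun n => ⟪x n, v⟫) atTop (𝓝 ⟪q, v⟫))
    (hSx : Tendsto (fun n => ‖x n - S (x n)‖) atTop (𝓝 0)) :
    q ∈ C ∧ ∀ y ∈ C, 0 ≤ ⟪A q, y - q⟫ := by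
  haveI : Nonempty C := hCne.to_subtype
  -- Lipschitz with real constant
  have hlipR : ∀ a b : H, ‖A a - A b‖ ≤ L * ‖a - b‖ := by
    intro a b
    have := hlip.dist_le_mul a b
    rwa [dist_eq_norm, dist_eq_norm, Real.coe_toNNReal L hL.le] at this
  -- projection characterization
  have hPchar : ∀ z : H, ∀ w ∈ C, ⟪z - P z, w - P z⟫ ≤ 0 := by
    intro z w hw
    have hPz := (hP z).1
    have heq : ‖z - P z‖ = ⨅ w : C, ‖z - w‖ := by
      apply le_antisymm
      · exact le_ciInf fun w => (hP z).2 w w.2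
      · exact ciInf_le ⟨0, fun r ⟨w, hw⟩ => hw ▸ norm_nonneg _⟩ (⟨P z, hPz⟩ : C)
    exact (norm_eq_iInf_iff_real_inner_le_zero hCconv hPz).1 heq w hw
  have hSC : ∀ n, S (x n) ∈ C := fun n => by rw [hS]; exact (hP _).1
  -- q ∈ C
  have hqC : q ∈ C := by
    set v := q - P q with hv
    have h1 : ∀ n, ⟪x n, v⟫ ≤ ‖x n - S (x n)‖ * ‖v‖ + ⟪P q, v⟫ := by
      intro n
      have h2 : ⟪v, S (x n) - P q⟫ ≤ 0 := hPchar q (S (x n)) (hSC n)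
      have h3 : ⟪x n - S (x n), v⟫ ≤ ‖x n - S (x n)‖ * ‖v‖ := real_inner_le_norm _ _
      have h4 : ⟪v, S (x n) - P q⟫ = ⟪S (x n) - P q, v⟫ := real_inner_comm _ _
      have h5 : ⟪x n, v⟫ = ⟪x n - S (x n), v⟫ + ⟪S (x n) - P q, v⟫ + ⟪P q, v⟫ := by
        simp [inner_sub_left]
      linarith
    have hlim1 : Tendsto (fun n => ‖x n - S (x n)‖ * ‖v‖ + ⟪P q, v⟫) atTop
        (𝓝 (0 * ‖v‖ + ⟪P q, v⟫)) := ((hSx.mul_const _).add_const _)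
    have hle := le_of_tendsto_of_tendsto' (hweak v) hlim1 h1
    rw [zero_mul, zero_add] at hle
    have hv0 : ⟪q - P q, v⟫ ≤ 0 := by rw [inner_sub_left]; linarith
    rw [← hv, real_inner_self_eq_norm_sq] at hv0
    have hv1 : ‖v‖ = 0 := by nlinarith [norm_nonneg v]
    have hv2 : q = P q := by
      have := norm_eq_zero.mp hv1
      rw [hv, sub_eq_zero] at this; exact this
    rw [hv2]; exact (hP q).1
  refine ⟨hqC, ?_⟩
  -- boundedness of x n
  obtain ⟨M, hM⟩ : ∃ M, ∀ n, ‖x n‖ ≤ M := by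
    have hpt : ∀ v : H, ∃ c : ℝ, ∀ n, ‖(innerSL ℝ (x n)) v‖ ≤ c := by
      intro v
      have : Tendsto (fun n => ‖⟪x n, v⟫‖) atTop (𝓝 ‖⟪q, v⟫‖) := (hweak v).norm
      obtain ⟨c, hc⟩ := this.bddAbove_range
      exact ⟨c, fun n => hc ⟨n, rfl⟩⟩
    obtain ⟨M, hM⟩ := banach_steinhaus hpt
    exact ⟨M, fun n => by rw [← innerSL_apply_norm ℝ (x n)]; exact hM n⟩
  -- bound on ‖x n - S (x n)‖
  obtain ⟨E, hE⟩ : ∃ E, ∀ n, ‖x n - S (x n)‖ ≤ E := by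
    obtain ⟨c, hc⟩ := hSx.bddAbove_range
    exact ⟨c, fun n => hc ⟨n, rfl⟩⟩
  -- bound on ‖A (x n)‖
  have hA : ∀ n, ‖A (x n)‖ ≤ ‖A q‖ + L * (M + ‖q‖) := by
    intro n
    have h1 : ‖A (x n) - A q‖ ≤ L * ‖x n - q‖ := hlipR _ _
    have h2 : ‖x n - q‖ ≤ M + ‖q‖ := (norm_sub_le _ _).trans (by linarith [hM n])
    have h3 : ‖A (x n)‖ ≤ ‖A (x n) - A q‖ + ‖A q‖ := by
      simpa using norm_sub_le (A (x n) - A q) (-A q)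
    nlinarith
  set KA := ‖A q‖ + L * (M + ‖q‖) with hKA
  -- Minty: ∀ y ∈ C, 0 ≤ ⟪A y, y - q⟫
  have hMinty : ∀ y ∈ C, 0 ≤ ⟪A y, y - q⟫ := by
    intro y hy
    have key : ∀ n, -(‖x n - S (x n)‖ * ((‖y‖ + (M + E)) + μ * KA))
        ≤ μ * ⟪A y, y - x n⟫ := by
      intro n
      set s := S (x n) with hs
      set e := ‖x n - s‖ with he
      have he0 : 0 ≤ e := norm_nonneg _
      have hproj : ⟪(x n - μ • A (x n)) - s, y - s⟫ ≤ 0 := by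
        have hsp : s = P (x n - μ • A (x n)) := by rw [hs, hS]
        rw [hsp]; exact hPchar _ y hy
      have hproj' : ⟪x n - s, y - s⟫ ≤ μ * ⟪A (x n), y - s⟫ := by
        have hexp : ⟪(x n - μ • A (x n)) - s, y - s⟫
            = ⟪x n - s, y - s⟫ - μ * ⟪A (x n), y - s⟫ := by
          rw [sub_right_comm, inner_sub_left, real_inner_smul_left]
        rw [hexp] at hproj; linarith
      have hm' : ⟪A (x n), y - x n⟫ ≤ ⟪A y, y - x n⟫ := by
        have hmm := hmono (x n) y
        have h1 : ⟪A (x n) - A y, x n - y⟫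
            = ⟪A y, y - x n⟫ - ⟪A (x n), y - x n⟫ := by
          rw [inner_sub_left, show (x n : H) - y = -(y - x n) by abel,
            inner_neg_right, inner_neg_right]
          ring
        linarith
      have hsplit : ⟪A (x n), y - x n⟫ = ⟪A (x n), y - s⟫ + ⟪A (x n), s - x n⟫ := by
        rw [← inner_add_right]; congr 1; abel
      have hys : ‖y - s‖ ≤ ‖y‖ + (M + E) := by
        have h1 : ‖s‖ ≤ M + E := by
          calc ‖s‖ = ‖x n - (x n - s)‖ := by rw [sub_sub_cancel]
            _ ≤ ‖x n‖ + ‖x n - s‖ := norm_sub_le _ _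
            _ ≤ M + E := add_le_add (hM n) (hE n)
        calc ‖y - s‖ ≤ ‖y‖ + ‖s‖ := norm_sub_le _ _
          _ ≤ ‖y‖ + (M + E) := by linarith
      have hAn : ‖A (x n)‖ ≤ KA := hA n
      have hKA0 : 0 ≤ KA := (norm_nonneg _).trans hAn
      have hb1 : -(e * ‖y - s‖) ≤ ⟪x n - s, y - s⟫ := by
        have := abs_real_inner_le_norm (x n - s) (y - s)
        rw [abs_le] at this; linarith [this.1]
      have hb2 : -(‖A (x n)‖ * e) ≤ ⟪A (x n), s - x n⟫ := by
        have h := abs_real_inner_le_norm (A (x n)) (s - x n)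
        rw [abs_le, show ‖s - x n‖ = e from by rw [he, norm_sub_rev]] at h
        linarith [h.1]
      -- stepwise
      have s1 : μ * ⟪A (x n), y - x n⟫ ≤ μ * ⟪A y, y - x n⟫ :=
        mul_le_mul_of_nonneg_left hm' hμ.le
      have s2 : μ * ⟪A (x n), y - x n⟫
          = μ * ⟪A (x n), y - s⟫ + μ * ⟪A (x n), s - x n⟫ := by rw [hsplit]; ring
      have s4 : -(e * (‖y‖ + (M + E))) ≤ ⟪x n - s, y - s⟫ := by
        have := mul_le_mul_of_nonneg_left hys he0
        linarith
      have s5 : -(μ * (KA * e)) ≤ μ * ⟪A (x n), s - x n⟫ := by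
        have h1 : ‖A (x n)‖ * e ≤ KA * e := mul_le_mul_of_nonneg_right hAn he0
        have h2 : -(KA * e) ≤ ⟪A (x n), s - x n⟫ := by linarith
        nlinarith
      nlinarith
    have hlim : Tendsto (fun n => μ * ⟪A y, y - x n⟫) atTop (𝓝 (μ * ⟪A y, y - q⟫)) := by
      have h1 : Tendsto (fun n => ⟪A y, y⟫ - ⟪x n, A y⟫) atTop
          (𝓝 (⟪A y, y⟫ - ⟪q, A y⟫)) := (hweak (A y)).const_sub _
      have h2 : ∀ z : H, ⟪A y, y - z⟫ = ⟪A y, y⟫ - ⟪z, A y⟫ := by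
        intro z; rw [inner_sub_right, real_inner_comm z]
      simp only [h2]
      exact h1.const_mul μ
    have hlow : Tendsto (fun n => -(‖x n - S (x n)‖ * ((‖y‖ + (M + E)) + μ * KA)))
        atTop (𝓝 0) := by
      have := (hSx.mul_const ((‖y‖ + (M + E)) + μ * KA)).neg
      simpa using this
    have := le_of_tendsto_of_tendsto' hlow hlim key
    nlinarith
  -- Minty trick
  intro y hy
  by_cases hyq : y = q
  · simp [hyq]
  have hstep : ∀ t : ℝ, 0 < t → t ≤ 1 → -(L * t * ‖y - q‖ ^ 2) ≤ ⟪A q, y - q⟫ := by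
    intro t ht ht1
    set yt := q + t • (y - q) with hyt
    have hytC : yt ∈ C := by
      have := hCconv hqC hy (by linarith : (0:ℝ) ≤ 1 - t) ht.le (by ring)
      have heq : (1 - t) • q + t • y = yt := by
        rw [hyt]; rw [smul_sub]; module
      rwa [heq] at this
    have h0 : 0 ≤ ⟪A yt, yt - q⟫ := hMinty yt hytC
    have h1 : yt - q = t • (y - q) := by rw [hyt]; abel
    rw [h1, real_inner_smul_right] at h0
    have h2 : 0 ≤ ⟪A yt, y - q⟫ := nonneg_of_mul_nonneg_right h0 ht
    have h3 : ‖A q - A yt‖ ≤ L * (t * ‖y - q‖) := by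
      have := hlipR q yt
      rw [show q - yt = -(t • (y - q)) by rw [hyt]; abel, norm_neg, norm_smul,
        Real.norm_eq_abs, abs_of_pos ht] at this
      exact this
    have h4 : -(‖A q - A yt‖ * ‖y - q‖) ≤ ⟪A q - A yt, y - q⟫ := by
      have h := abs_real_inner_le_norm (A q - A yt) (y - q)
      rw [abs_le] at h; linarith [h.1]
    have h5 : ⟪A q, y - q⟫ = ⟪A yt, y - q⟫ + ⟪A q - A yt, y - q⟫ := by
      rw [inner_sub_left]; ring
    have h6 : ‖A q - A yt‖ * ‖y - q‖ ≤ L * t * ‖y - q‖ ^ 2 := by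
      have := mul_le_mul_of_nonneg_right h3 (norm_nonneg (y - q))
      nlinarith
    linarith
  have hseq : Tendsto (fun k : ℕ => -(L * (1 / (k + 1)) * ‖y - q‖ ^ 2)) atTop (𝓝 0) := by
    have h1 : Tendsto (fun k : ℕ => (1 : ℝ) / (k + 1)) atTop (𝓝 0) :=
      tendsto_one_div_add_atTop_nhds_zero_nat
    have := ((h1.const_mul L).mul_const (‖y - q‖ ^ 2)).neg
    simpa using this
  refine le_of_tendsto hseq (Eventually.of_forall fun k => ?_)
  exact hstep (1 / (k + 1)) (by positivity) (by
    rw [div_le_one (by positivity)]; linarith [Nat.cast_nonneg (α := ℝ) k])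
end

section
/- Let {a_n} be a sequence of nonnegative reals such that there is a subsequence {a_{n_j}} with a_{n_j} < a_{n_j+1} for all j. Then there exists a nondecreasing sequence {m_k} of natural numbers with m_k → ∞ such that, for all sufficiently large k, a_{m_k} ≤ a_{m_k+1} and a_k ≤ a_{m_k+1}. -/
/-!
Take `m k` to be the last ascent `n ≤ k`, i.e. the largest `n ≤ k` with `a n ≤ a (n + 1)`; it exists
once `k` passes the first ascent `φ 0`. Between `m k + 1` and `k` the sequence strictly decreases,
so `a k ≤ a (m k + 1)`; and `m k → ∞` because the ascents `φ j` are unbounded.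
-/

open Filter Topology

section LastAscent

variable {α : Type*} [LinearOrder α] (a : ℕ → α)

def lastAscent (k : ℕ) : ℕ :=
  Nat.findGreatest (fun n => a n ≤ a (n + 1)) k

variable {a}

theorem lastAscent_mono : Monotone (lastAscent a) :=
  fun _ _ hij => Nat.findGreatest_mono (fun _ h => h) hij

theorem lastAscent_le (k : ℕ) : lastAscent a k ≤ k :=
  Nat.findGreatest_le k

theorem le_lastAscent {n k : ℕ} (hn : a n ≤ a (n + 1)) (hnk : n ≤ k) : n ≤ lastAscent a k :=
  Nat.le_findGreatest hnk hn

theorem lastAscent_isAscent {n k : ℕ} (hn : a n ≤ a (n + 1)) (hnk : n ≤ k) :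
    a (lastAscent a k) ≤ a (lastAscent a k + 1) :=
  Nat.findGreatest_spec (P := fun n => a n ≤ a (n + 1)) hnk hn

theorem le_apply_lastAscent_succ {n k : ℕ} (hn : a n ≤ a (n + 1)) (hnk : n ≤ k) :
    a k ≤ a (lastAscent a k + 1) := by
  set M := lastAscent a k
  have hM : a M ≤ a (M + 1) := lastAscent_isAscent hn hnk
  suffices ∀ i, M ≤ i → i ≤ k → a i ≤ a (M + 1) from this k (lastAscent_le k) le_rfl
  intro i hi
  induction i, hi using Nat.le_induction with
  | base => exact fun _ => hM
  | succ i hMi ih =>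
    intro hik
    rcases hMi.eq_or_lt with rfl | hlt
    · exact le_rfl
    · have hdesc : a (i + 1) < a i :=
        not_le.mp (Nat.findGreatest_is_greatest hlt (by omega))
      exact hdesc.le.trans (ih (by omega))

end LastAscent

theorem stmt_7_general (a : ℕ → ℝ)
    (h : ∃ φ : ℕ → ℕ, StrictMono φ ∧ ∀ j, a (φ j) < a (φ j + 1)) :
    ∃ m : ℕ → ℕ, Monotone m ∧ Tendsto m atTop atTop ∧
      ∀ᶠ k in atTop, a (m k) ≤ a (m k + 1) ∧ a k ≤ a (m k + 1) := by
  obtain ⟨φ, hφ, hup⟩ := h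
  have hasc : ∀ j, a (φ j) ≤ a (φ j + 1) := fun j => (hup j).le
  refine ⟨fun k => lastAscent a (max k (φ 0)), ?_, ?_, ?_⟩
  · exact lastAscent_mono.comp fun _ _ hij => max_le_max hij le_rfl
  · refine tendsto_atTop_atTop.mpr fun b => ⟨φ b, fun k hk => ?_⟩
    exact hφ.le_apply.trans (le_lastAscent (hasc b) (hk.trans (le_max_left _ _)))
  · filter_upwards [eventually_ge_atTop (φ 0)] with k hk
    simp only [max_eq_left hk]
    exact ⟨lastAscent_isAscent (hasc 0) hk, le_apply_lastAscent_succ (hasc 0) hk⟩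

theorem stmt_7 (a : ℕ → ℝ) (ha : ∀ n, 0 ≤ a n)
    (h : ∃ φ : ℕ → ℕ, StrictMono φ ∧ ∀ j, a (φ j) < a (φ j + 1)) :
    ∃ m : ℕ → ℕ, Monotone m ∧ Tendsto m atTop atTop ∧
      ∀ᶠ k in atTop, a (m k) ≤ a (m k + 1) ∧ a k ≤ a (m k + 1) :=
  stmt_7_general a h
end

section
/- Let A be monotone and L-Lipschitz, p ∈ VI(C, A), w_n ∈ H, y_n = P_C(w_n − λ_n A w_n), T_n = {x ∈ H : ⟨w_n − λ_n A w_n − y_n, x − y_n⟩ ≤ 0}, and z_n = P_{T_n}(w_n − λ_n A y_n). If ‖Aw_n − Ay_n‖ ≤ (μ/λ_{n+1})‖w_n − y_n‖ with μ ∈ (0,1) and λ_n, λ_{n+1} > 0, then ‖z_n − p‖² ≤ ‖w_n − p‖² − (1 − μλ_n/λ_{n+1})‖y_n − w_n‖² − (1 − μλ_n/λ_{n+1})‖z_n − y_n‖². -/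
open RealInnerProductSpace

lemma proj_char {H : Type*} [NormedAddCommGroup H] [InnerProductSpace ℝ H]
    {K : Set H} (hK : Convex ℝ K) {x y : H} (hy : y ∈ K)
    (hmin : ∀ u ∈ K, ‖x - y‖ ≤ ‖x - u‖) : ∀ u ∈ K, ⟪x - y, u - y⟫ ≤ 0 := by
  rw [← norm_eq_iInf_iff_real_inner_le_zero hK hy]
  haveI : Nonempty K := ⟨⟨y, hy⟩⟩
  refine le_antisymm (le_ciInf fun u => hmin u u.2) ?_
  have hbdd : BddBelow (Set.range fun u : K => ‖x - u‖) := by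
    refine ⟨0, ?_⟩
    rintro r ⟨u, rfl⟩
    exact norm_nonneg _
  exact ciInf_le hbdd ⟨y, hy⟩

theorem stmt_12 {H : Type*} [NormedAddCommGroup H] [InnerProductSpace ℝ H] [CompleteSpace H]
    (C : Set H) (hCne : C.Nonempty) (hCc : IsClosed C) (hCconv : Convex ℝ C)
    (A : H → H) (L : ℝ) (hL : 0 < L)
    (hmono : ∀ x y : H, 0 ≤ ⟪A x - A y, x - y⟫)
    (hlip : LipschitzWith (Real.toNNReal L) A)
    (p : H) (hp : p ∈ C ∧ ∀ x ∈ C, 0 ≤ ⟪A p, x - p⟫)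
    (μ lamn lamn1 : ℝ) (hμ : μ ∈ Set.Ioo (0 : ℝ) 1)
    (hlamn : 0 < lamn) (hlamn1 : 0 < lamn1)
    (w y z : H)
    (hy : y ∈ C ∧ ∀ u ∈ C, ‖w - lamn • A w - y‖ ≤ ‖w - lamn • A w - u‖)
    (T : Set H) (hT : T = {x : H | ⟪w - lamn • A w - y, x - y⟫ ≤ 0})
    (hz : z ∈ T ∧ ∀ u ∈ T, ‖w - lamn • A y - z‖ ≤ ‖w - lamn • A y - u‖)
    (hstep : ‖A w - A y‖ ≤ μ / lamn1 * ‖w - y‖) :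
    ‖z - p‖ ^ 2 ≤ ‖w - p‖ ^ 2 - (1 - μ * lamn / lamn1) * ‖y - w‖ ^ 2
      - (1 - μ * lamn / lamn1) * ‖z - y‖ ^ 2 := by
  set κ := μ * lamn / lamn1 with hκdef
  obtain ⟨hμ0, hμ1⟩ := hμ
  have hκ : 0 ≤ κ := div_nonneg (mul_nonneg hμ0.le hlamn.le) hlamn1.le
  -- T is convex
  have hTconv : Convex ℝ T := by
    rw [hT]
    have : {x : H | ⟪w - lamn • A w - y, x - y⟫ ≤ 0}
        = {x : H | ⟪w - lamn • A w - y, x⟫ ≤ ⟪w - lamn • A w - y, y⟫} := by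
      ext x; simp [inner_sub_right, sub_nonpos]
    rw [this]
    exact convex_halfSpace_le ⟨fun a b => inner_add_right _ _ _,
      fun c a => real_inner_smul_right _ _ c⟩ _
  -- p ∈ T
  have hpT : p ∈ T := by
    rw [hT]
    exact proj_char hCconv hy.1 hy.2 p hp.1
  -- projection characterization on T
  have h1 : ⟪w - lamn • A y - z, p - z⟫ ≤ 0 := proj_char hTconv hz.1 hz.2 p hpT
  have hzT : ⟪w - lamn • A w - y, z - y⟫ ≤ 0 := by
    have := hz.1; rw [hT] at this; exact this
  have hm : 0 ≤ ⟪A y - A p, y - p⟫ := hmono y p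
  have hpy : 0 ≤ ⟪A p, y - p⟫ := hp.2 y hy.1
  -- AM-GM bound
  have hAM : 2 * lamn * ⟪A w - A y, z - y⟫ ≤ κ * (‖w - y‖ ^ 2 + ‖z - y‖ ^ 2) := by
    have hcs := real_inner_le_norm (A w - A y) (z - y)
    have h2 : ‖A w - A y‖ * ‖z - y‖ ≤ μ / lamn1 * ‖w - y‖ * ‖z - y‖ :=
      mul_le_mul_of_nonneg_right hstep (norm_nonneg _)
    have hsq : 2 * (‖w - y‖ * ‖z - y‖) ≤ ‖w - y‖ ^ 2 + ‖z - y‖ ^ 2 := by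
      nlinarith [sq_nonneg (‖w - y‖ - ‖z - y‖)]
    have hκ2 : 0 < μ / lamn1 := div_pos hμ0 hlamn1
    have : ⟪A w - A y, z - y⟫ ≤ μ / lamn1 * (‖w - y‖ * ‖z - y‖) := by
      calc ⟪A w - A y, z - y⟫ ≤ ‖A w - A y‖ * ‖z - y‖ := hcs
        _ ≤ μ / lamn1 * ‖w - y‖ * ‖z - y‖ := h2
        _ = μ / lamn1 * (‖w - y‖ * ‖z - y‖) := by ring
    calc 2 * lamn * ⟪A w - A y, z - y⟫
        ≤ 2 * lamn * (μ / lamn1 * (‖w - y‖ * ‖z - y‖)) := by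
          apply mul_le_mul_of_nonneg_left this; linarith
      _ = κ * (2 * (‖w - y‖ * ‖z - y‖)) := by rw [hκdef]; ring
      _ ≤ κ * (‖w - y‖ ^ 2 + ‖z - y‖ ^ 2) := mul_le_mul_of_nonneg_left hsq hκ
  -- key identity
  have hid : ‖z - p‖ ^ 2 = ‖w - p‖ ^ 2 - ‖w - y‖ ^ 2 - ‖z - y‖ ^ 2
      + 2 * ⟪w - lamn • A y - z, p - z⟫
      + 2 * lamn * ⟪A y - A p, p - y⟫
      + 2 * lamn * ⟪A p, p - y⟫
      + 2 * ⟪w - lamn • A w - y, z - y⟫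
      + 2 * lamn * ⟪A w - A y, z - y⟫ := by
    simp only [@norm_sub_sq_real, inner_sub_left, inner_sub_right, real_inner_smul_left,
      real_inner_smul_right]
    ring_nf
    linear_combination (2 : ℝ) * real_inner_comm w p - 2 * real_inner_comm w y
      - 2 * real_inner_comm z y + 2 * real_inner_comm z p
      + 2 * lamn * real_inner_comm (A y) p - 2 * lamn * real_inner_comm (A y) z
      + 2 * lamn * real_inner_comm (A w) z - 2 * lamn * real_inner_comm (A w) y
      + 2 * lamn * real_inner_comm (A p) y - 2 * lamn * real_inner_comm (A p) p
      - 2 * real_inner_self_eq_norm_sq z - 2 * real_inner_self_eq_norm_sq y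
      - 2 * real_inner_comm z p - 2 * real_inner_comm w p - 2 * real_inner_comm y w
      - 4 * real_inner_comm y z
      - 2 * lamn * real_inner_comm (A y) p - 2 * lamn * real_inner_comm z (A y)
      - 2 * lamn * real_inner_comm (A w) z - 2 * lamn * real_inner_comm y (A w)
      - 2 * lamn * real_inner_comm (A p) y - 2 * lamn * real_inner_comm p (A p)
  have hm' : ⟪A y - A p, p - y⟫ ≤ 0 := by
    rw [show p - y = -(y - p) from by abel, inner_neg_right]; linarith
  have hpy' : ⟪A p, p - y⟫ ≤ 0 := by
    rw [show p - y = -(y - p) from by abel, inner_neg_right]; linarith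
  have hnorm : ‖y - w‖ = ‖w - y‖ := norm_sub_rev _ _
  rw [hnorm]
  nlinarith [h1, hzT, hm', hpy', hAM, hid, hlamn.le]
end

section
/- Let A be monotone and L-Lipschitz, p ∈ VI(C, A), y_n = P_C(w_n − λ_n A w_n), z_n = y_n − λ_n(Ay_n − Aw_n), and suppose ‖Aw_n − Ay_n‖ ≤ (μ/λ_{n+1})‖w_n − y_n‖ with μ ∈ (0,1), λ_n, λ_{n+1} > 0. Then ‖z_n − p‖² ≤ ‖w_n − p‖² − (1 − μ²λ_n²/λ_{n+1}²)‖w_n − y_n‖². -/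
/-!
Write `z - p = (y - p) + λ (A w - A y)` and `w - p = (w - y) + (y - p)`. Expanding the squares,
`‖z - p‖²` equals `‖w - p‖² - ‖w - y‖² + λ² ‖A w - A y‖²` minus twice two inner products with
`y - p`: one is nonnegative because `y = P_C (w - λ A w)` (obtuse-angle characterization of the
projection), the other because `A` is monotone and `p ∈ VI(C, A)`. The step-size rule then bounds
`λ² ‖A w - A y‖²` by `μ² λ² / λ'² ‖w - y‖²`.
-/

open RealInnerProductSpace

section TsengStep

variable {H : Type*} [NormedAddCommGroup H] [InnerProductSpace ℝ H]

theorem real_inner_sub_nonpos_of_forall_norm_sub_le {K : Set H} (hK : Convex ℝ K) {u v : H}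
    (hv : v ∈ K) (hmin : ∀ w ∈ K, ‖u - v‖ ≤ ‖u - w‖) : ∀ w ∈ K, ⟪u - v, w - v⟫ ≤ 0 :=
  (norm_eq_iInf_iff_real_inner_le_zero hK hv).1
    (IsMinOn.iInf_eq (f := fun w => ‖u - w‖) hv hmin).symm

-- A solution of the variational inequality of a monotone operator solves the Minty inequality.
theorem real_inner_apply_sub_nonneg_of_monotone {C : Set H} {A : H → H}
    (hmono : ∀ x y : H, 0 ≤ ⟪A x - A y, x - y⟫) {p : H} (hp : ∀ x ∈ C, 0 ≤ ⟪A p, x - p⟫)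
    {y : H} (hy : y ∈ C) : 0 ≤ ⟪A y, y - p⟫ := by
  have h := hmono y p
  rw [inner_sub_left] at h
  linarith [hp y hy]

theorem norm_tseng_step_sub_sq (w y p a b : H) (lam : ℝ) :
    ‖y - lam • (b - a) - p‖ ^ 2 = ‖w - p‖ ^ 2 - ‖w - y‖ ^ 2 + lam ^ 2 * ‖a - b‖ ^ 2
      - 2 * ⟪w - lam • a - y, y - p⟫ - 2 * lam * ⟪b, y - p⟫ := by
  have hz : y - lam • (b - a) - p = (y - p) + lam • (a - b) := by module
  have hw : w - p = (w - y) + (y - p) := by abel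
  rw [hz, hw, norm_add_sq_real, norm_add_sq_real, norm_smul, mul_pow, Real.norm_eq_abs, sq_abs]
  simp only [inner_sub_left, inner_sub_right, real_inner_smul_right, real_inner_comm]
  ring

theorem norm_tseng_step_sub_sq_le {C : Set H} (hC : Convex ℝ C) {A : H → H}
    (hmono : ∀ x y : H, 0 ≤ ⟪A x - A y, x - y⟫) {p : H} (hp : p ∈ C ∧ ∀ x ∈ C, 0 ≤ ⟪A p, x - p⟫)
    {lam : ℝ} (hlam : 0 ≤ lam) {w y : H}
    (hy : y ∈ C ∧ ∀ u ∈ C, ‖w - lam • A w - y‖ ≤ ‖w - lam • A w - u‖) :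
    ‖y - lam • (A y - A w) - p‖ ^ 2
      ≤ ‖w - p‖ ^ 2 - ‖w - y‖ ^ 2 + lam ^ 2 * ‖A w - A y‖ ^ 2 := by
  have hproj : 0 ≤ ⟪w - lam • A w - y, y - p⟫ := by
    have h := real_inner_sub_nonpos_of_forall_norm_sub_le hC hy.1 hy.2 p hp.1
    rw [← neg_sub y p, inner_neg_right] at h
    linarith
  have hsol := real_inner_apply_sub_nonneg_of_monotone hmono hp.2 hy.1
  rw [norm_tseng_step_sub_sq w y p]
  linarith [mul_nonneg hlam hsol]

end TsengStep

theorem stmt_13_general {H : Type*} [NormedAddCommGroup H] [InnerProductSpace ℝ H]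
    (C : Set H) (hCconv : Convex ℝ C)
    (A : H → H)
    (hmono : ∀ x y : H, 0 ≤ ⟪A x - A y, x - y⟫)
    (p : H) (hp : p ∈ C ∧ ∀ x ∈ C, 0 ≤ ⟪A p, x - p⟫)
    (μ lamn lamn1 : ℝ)
    (hlamn : 0 < lamn)
    (w y z : H)
    (hy : y ∈ C ∧ ∀ u ∈ C, ‖w - lamn • A w - y‖ ≤ ‖w - lamn • A w - u‖)
    (hz : z = y - lamn • (A y - A w))
    (hstep : ‖A w - A y‖ ≤ μ / lamn1 * ‖w - y‖) :
    ‖z - p‖ ^ 2 ≤ ‖w - p‖ ^ 2 - (1 - μ ^ 2 * lamn ^ 2 / lamn1 ^ 2) * ‖w - y‖ ^ 2 := by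
  have hstep_sq : ‖A w - A y‖ ^ 2 ≤ (μ / lamn1 * ‖w - y‖) ^ 2 :=
    pow_le_pow_left₀ (norm_nonneg _) hstep 2
  calc ‖z - p‖ ^ 2 ≤ ‖w - p‖ ^ 2 - ‖w - y‖ ^ 2 + lamn ^ 2 * ‖A w - A y‖ ^ 2 :=
        hz ▸ norm_tseng_step_sub_sq_le hCconv hmono hp hlamn.le hy
    _ ≤ ‖w - p‖ ^ 2 - ‖w - y‖ ^ 2 + lamn ^ 2 * (μ / lamn1 * ‖w - y‖) ^ 2 := by gcongr
    _ = ‖w - p‖ ^ 2 - (1 - μ ^ 2 * lamn ^ 2 / lamn1 ^ 2) * ‖w - y‖ ^ 2 := by ring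

theorem stmt_13 {H : Type*} [NormedAddCommGroup H] [InnerProductSpace ℝ H] [CompleteSpace H]
    (C : Set H) (hCne : C.Nonempty) (hCc : IsClosed C) (hCconv : Convex ℝ C)
    (A : H → H) (L : ℝ) (hL : 0 < L)
    (hmono : ∀ x y : H, 0 ≤ ⟪A x - A y, x - y⟫)
    (hlip : LipschitzWith (Real.toNNReal L) A)
    (p : H) (hp : p ∈ C ∧ ∀ x ∈ C, 0 ≤ ⟪A p, x - p⟫)
    (μ lamn lamn1 : ℝ) (hμ : μ ∈ Set.Ioo (0 : ℝ) 1)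
    (hlamn : 0 < lamn) (hlamn1 : 0 < lamn1)
    (w y z : H)
    (hy : y ∈ C ∧ ∀ u ∈ C, ‖w - lamn • A w - y‖ ≤ ‖w - lamn • A w - u‖)
    (hz : z = y - lamn • (A y - A w))
    (hstep : ‖A w - A y‖ ≤ μ / lamn1 * ‖w - y‖) :
    ‖z - p‖ ^ 2 ≤ ‖w - p‖ ^ 2 - (1 - μ ^ 2 * lamn ^ 2 / lamn1 ^ 2) * ‖w - y‖ ^ 2 :=
  stmt_13_general C hCconv A hmono p hp μ lamn lamn1 hlamn w y z hy hz hstep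
end
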